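/- Let g : [0,1] → ℝ≥0 be continuous with g(0) = g(1) = 0 and define the equivalence s ∼_g t iff g(s) = g(t) = m_g(s,t), where m_g(s,t) = min over [s∧t, s∨t] of g. Fix s* ∈ [0,1] and define ḡ(t) = g(s*) + g(s* ⊕ t) − 2 m_g(s*, s* ⊕ t), where s* ⊕ t = s* + t if s* + t ≤ 1 and s* + t − 1 otherwise. Then for all t, t' ∈ [0,1]: s* ⊕ t ∼_g s* ⊕ t' if and only if t ∼_{ḡ} t'. -/

import Mathlib

/-!
With `u = s* ⊕ t`, the value `ḡ(t) = δ_g(s*, u)` is the height of `u` in the tree re-rooted at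
`s*`. For `a` between `s` and `b`, the minimum of `v ↦ δ_g(s, v)` over `[a, b]` is
`g(s) + m_g(a, b) - m_g(s, a) - m_g(s, b)`: the bound holds pointwise because
`m_g(s, v) = min (m_g(s, a)) (m_g(a, v))`, and it is attained either at a minimiser of `g` on
`[a, b]` or at the first time after `a` at which `g` comes down to `m_g(s, a)`. The map `s* ⊕ ·`
sends `[t, t']` onto one such interval or onto two of them glued at `0 ~ 1` (where
`δ_g(s*, 0) = δ_g(s*, 1)` since `g` vanishes at both ends), so in every case
`m_ḡ(t, t') = g(s*) + m_g(u, u') - m_g(s*, u) - m_g(s*, u')`, i.e. `δ_ḡ(t, t') = δ_g(u, u')`.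
Both relations say that these pseudometrics vanish. Extending `g` continuously from `[0, 1]` to `ℝ`
first removes all boundedness side conditions.
-/
open Set

/-- `m_g(s,t)`: the minimum (infimum) of `g` over the closed interval between `s` and `t`. -/
noncomputable def mg (g : ℝ → ℝ) (s t : ℝ) : ℝ := sInf (g '' Set.uIcc s t)

/-- `δ_g(s,t) = g(s) + g(t) − 2 m_g(s,t)`, the tree pseudometric coded by `g`. -/
noncomputable def deltag (g : ℝ → ℝ) (s t : ℝ) : ℝ := g s + g t - 2 * mg g s t

/-- The equivalence relation coded by `g`: `s ∼_g t` iff `g(s) = g(t) = m_g(s,t)`. -/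
def simg (g : ℝ → ℝ) (s t : ℝ) : Prop := g s = g t ∧ g s = mg g s t

/-- Cyclic shift on `[0,1]`: `s ⊕ t = s + t` if `s + t ≤ 1`, and `s + t − 1` otherwise. -/
noncomputable def oplus (s t : ℝ) : ℝ := if s + t ≤ 1 then s + t else s + t - 1

/-- The re-rooted coding function `ḡ(t) = g(s*) + g(s* ⊕ t) − 2 m_g(s*, s* ⊕ t)`. -/
noncomputable def gbar (g : ℝ → ℝ) (sstar t : ℝ) : ℝ :=
  g sstar + g (oplus sstar t) - 2 * mg g sstar (oplus sstar t)

section TreeCoding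

variable {f g : ℝ → ℝ} {s t t' a b c x : ℝ}

lemma mg_comm (g : ℝ → ℝ) (s t : ℝ) : mg g s t = mg g t s := by
  rw [mg, mg, uIcc_comm]

lemma mg_congr (h : EqOn f g (uIcc s t)) : mg f s t = mg g s t := by
  rw [mg, mg, h.image_eq]

lemma simg_congr (h : EqOn f g (uIcc s t)) : simg f s t ↔ simg g s t := by
  rw [simg, simg, h left_mem_uIcc, h right_mem_uIcc, mg_congr h]

lemma isLeast_mg (hg : Continuous g) (s t : ℝ) : IsLeast (g '' uIcc s t) (mg g s t) :=
  (isCompact_uIcc.image hg).isLeast_sInf (nonempty_uIcc.image g)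

lemma mg_le (hg : Continuous g) (hx : x ∈ uIcc s t) : mg g s t ≤ g x :=
  (isLeast_mg hg s t).2 (mem_image_of_mem g hx)

lemma le_mg (h : ∀ x ∈ uIcc s t, c ≤ g x) : c ≤ mg g s t :=
  le_csInf (nonempty_uIcc.image g) (forall_mem_image.2 h)

lemma mg_anti (hg : Continuous g) (h : uIcc s t ⊆ uIcc a b) : mg g a b ≤ mg g s t :=
  le_mg fun _ hx => mg_le hg (h hx)

lemma mg_eq_zero (hg : Continuous g) (hnn : ∀ x, 0 ≤ g x) (hx : x ∈ uIcc s t) (h : g x = 0) :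
    mg g s t = 0 :=
  le_antisymm (h ▸ mg_le hg hx) (le_mg fun y _ => hnn y)

lemma mg_split (hg : Continuous g) (hab : a ≤ b) (hbc : b ≤ c) :
    mg g a c = min (mg g a b) (mg g b c) := by
  refine (isLeast_mg hg a c).unique ?_
  rw [uIcc_of_le (hab.trans hbc), ← Icc_union_Icc_eq_Icc hab hbc, image_union]
  simpa only [uIcc_of_le hab, uIcc_of_le hbc] using (isLeast_mg hg a b).union (isLeast_mg hg b c)

lemma mg_comp_neg (g : ℝ → ℝ) (s t : ℝ) : mg (g ∘ Neg.neg) s t = mg g (-s) (-t) := by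
  rw [mg, mg, image_comp, image_neg_uIcc]

lemma deltag_comp_neg (g : ℝ → ℝ) (s t : ℝ) :
    deltag (g ∘ Neg.neg) s t = deltag g (-s) (-t) := by
  rw [deltag, deltag, mg_comp_neg, Function.comp_apply, Function.comp_apply]

lemma deltag_nonneg (hg : Continuous g) (s t : ℝ) : 0 ≤ deltag g s t := by
  have := mg_le hg (left_mem_uIcc : s ∈ uIcc s t)
  have := mg_le hg (right_mem_uIcc : t ∈ uIcc s t)
  rw [deltag]; linarith

lemma simg_iff_deltag_eq_zero (hb : BddBelow (g '' uIcc s t)) :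
    simg g s t ↔ deltag g s t = 0 := by
  have hs : mg g s t ≤ g s := csInf_le hb (mem_image_of_mem g left_mem_uIcc)
  have ht : mg g s t ≤ g t := csInf_le hb (mem_image_of_mem g right_mem_uIcc)
  rw [simg, deltag]
  constructor
  · rintro ⟨h₁, h₂⟩; linarith
  · intro h; constructor <;> linarith

lemma ContinuousOn.exists_first_eq (hf : ContinuousOn f (Icc a b)) (hc : c ≤ f a)
    (h : ∃ v ∈ Icc a b, f v ≤ c) : ∃ w ∈ Icc a b, f w = c ∧ ∀ y ∈ Icc a w, c ≤ f y := by
  set K := Icc a b ∩ f ⁻¹' Iic c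
  have hKbdd : BddBelow K := bddBelow_Icc.mono inter_subset_left
  have hwK : sInf K ∈ K :=
    (hf.preimage_isClosed_of_isClosed isClosed_Icc isClosed_Iic).csInf_mem h hKbdd
  have hfirst : ∀ y ∈ Icc a (sInf K), f y ≤ c → y = sInf K := fun y hy hyc =>
    le_antisymm hy.2 (csInf_le hKbdd ⟨⟨hy.1, hy.2.trans hwK.1.2⟩, hyc⟩)
  obtain ⟨y, hy, hfy⟩ := intermediate_value_Icc' hwK.1.1
    (hf.mono (Icc_subset_Icc_right hwK.1.2)) ⟨hwK.2, hc⟩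
  have hfw : f (sInf K) = c := hfirst y hy hfy.le ▸ hfy
  refine ⟨sInf K, hwK.1, hfw, fun y hy => not_lt.1 fun hlt => ?_⟩
  rw [hfirst y hy hlt.le, hfw] at hlt
  exact lt_irrefl c hlt

lemma isLeast_deltag_image_Icc (hg : Continuous g) (hsa : s ≤ a) (hab : a ≤ b) :
    IsLeast (deltag g s '' Icc a b) (g s + mg g a b - mg g s a - mg g s b) := by
  have hsplit : ∀ v ∈ Icc a b, mg g s v = min (mg g s a) (mg g a v) :=
    fun v hv => mg_split hg hsa hv.1
  have hmono : ∀ v ∈ Icc a b, mg g a b ≤ mg g a v := fun v hv =>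
    mg_anti hg (by rw [uIcc_of_le hv.1, uIcc_of_le hab]; exact Icc_subset_Icc_right hv.2)
  have hb : b ∈ Icc a b := right_mem_Icc.2 hab
  refine ⟨?_, ?_⟩
  · obtain ⟨v₀, hv₀, hgv₀⟩ := (isLeast_mg hg a b).1
    rw [uIcc_of_le hab] at hv₀
    rcases le_or_gt (mg g s a) (mg g a b) with hle | hlt
    · refine ⟨v₀, hv₀, ?_⟩
      simp only [deltag, hsplit v₀ hv₀, hsplit b hb, min_eq_left hle,
        min_eq_left (hle.trans (hmono v₀ hv₀)), hgv₀]
      ring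
    · -- the minimum is attained where `g` first comes down to `m_g(s, a)` after `a`
      obtain ⟨w, hw, hgw, hge⟩ := hg.continuousOn.exists_first_eq
        (mg_le hg right_mem_uIcc) ⟨v₀, hv₀, hgv₀ ▸ hlt.le⟩
      have hw' : mg g s a ≤ mg g a w := le_mg fun y hy => hge y (by rwa [uIcc_of_le hw.1] at hy)
      refine ⟨w, hw, ?_⟩
      simp only [deltag, hsplit w hw, hsplit b hb, min_eq_left hw', min_eq_right hlt.le, hgw]
      ring
  · rintro _ ⟨v, hv, rfl⟩
    have := hmono v hv
    have := mg_le hg (right_mem_uIcc : v ∈ uIcc a v)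
    simp only [deltag, hsplit v hv, hsplit b hb, min_def]
    split_ifs <;> linarith

lemma isLeast_deltag_image_uIcc (hg : Continuous g) (ha : a ∈ uIcc s b) :
    IsLeast (deltag g s '' uIcc a b) (g s + mg g a b - mg g s a - mg g s b) := by
  rcases mem_uIcc.1 ha with ⟨hsa, hab⟩ | ⟨hba, has⟩
  · rw [uIcc_of_le hab]
    exact isLeast_deltag_image_Icc hg hsa hab
  · have hneg := isLeast_deltag_image_Icc (hg.comp continuous_neg) (neg_le_neg has)
      (neg_le_neg hba)
    have himage : deltag (g ∘ Neg.neg) (-s) '' Icc (-a) (-b) = deltag g s '' Icc b a := by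
      rw [← image_neg_Icc, ← image_comp]
      exact image_congr fun v _ => by simp [deltag_comp_neg]
    simpa [himage, mg_comp_neg, uIcc_of_ge hba, mg_comm g b a] using hneg

lemma oplus_mem (hs : s ∈ Icc (0 : ℝ) 1) (ht : t ∈ Icc (0 : ℝ) 1) :
    oplus s t ∈ Icc (0 : ℝ) 1 := by
  unfold oplus
  split_ifs with h
  · exact ⟨add_nonneg hs.1 ht.1, h⟩
  · constructor <;> linarith [hs.2, ht.2]

lemma eqOn_gbar (hs : s ∈ Icc (0 : ℝ) 1) (h : EqOn f g (Icc 0 1)) :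
    EqOn (gbar f s) (gbar g s) (Icc 0 1) := fun _ hr => by
  have hu := oplus_mem hs hr
  rw [gbar, gbar, h hs, h hu, mg_congr (h.mono (uIcc_subset_Icc hs hu))]

lemma deltag_one_eq_deltag_zero (hg : Continuous g) (hnn : ∀ x, 0 ≤ g x) (h0 : g 0 = 0)
    (h1 : g 1 = 0) : deltag g s 1 = deltag g s 0 := by
  rw [deltag, deltag, h0, h1, mg_eq_zero hg hnn right_mem_uIcc h1,
    mg_eq_zero hg hnn right_mem_uIcc h0]

lemma image_gbar_Icc_of_add_le_one (h : s + t' ≤ 1) :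
    gbar g s '' Icc t t' = deltag g s '' Icc (s + t) (s + t') := by
  rw [← image_const_add_Icc, image_image]
  refine image_congr fun r hr => ?_
  rw [gbar, oplus, if_pos (by linarith [hr.2]), deltag]

lemma image_gbar_Icc_of_one_le_add (h01 : deltag g s 1 = deltag g s 0) (h : 1 ≤ s + t) :
    gbar g s '' Icc t t' = deltag g s '' Icc (s + t - 1) (s + t' - 1) := by
  have himage : Icc (s + t - 1) (s + t' - 1) = (fun r => r + (s - 1)) '' Icc t t' := by
    rw [image_add_const_Icc]; congr 1 <;> ring
  rw [himage, image_image]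
  refine image_congr fun r hr => ?_
  rcases (h.trans (by linarith [hr.1] : s + t ≤ s + r)).eq_or_lt with hr1 | hr1
  · rw [gbar, oplus, if_pos hr1.ge, ← hr1, ← deltag, h01]
    congr 1; linarith
  · rw [gbar, oplus, if_neg (not_le.2 hr1), deltag]
    ring_nf

theorem isLeast_image_gbar_Icc (hg : Continuous g) (hnn : ∀ x, 0 ≤ g x) (h0 : g 0 = 0)
    (h1 : g 1 = 0) (ht : t ∈ Icc (0 : ℝ) 1) (ht' : t' ∈ Icc (0 : ℝ) 1) (htt' : t ≤ t') :
    IsLeast (gbar g s '' Icc t t')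
      (g s + mg g (oplus s t) (oplus s t') - mg g s (oplus s t) - mg g s (oplus s t')) := by
  have h01 := deltag_one_eq_deltag_zero (s := s) hg hnn h0 h1
  by_cases hnowrap : s + t' ≤ 1
  · rw [image_gbar_Icc_of_add_le_one hnowrap, oplus, if_pos (by linarith), oplus, if_pos hnowrap,
      ← uIcc_of_le (by linarith)]
    exact isLeast_deltag_image_uIcc hg (mem_uIcc.2 (Or.inl ⟨by linarith [ht.1], by linarith⟩))
  by_cases hwrap : 1 < s + t
  · rw [image_gbar_Icc_of_one_le_add h01 hwrap.le, oplus, if_neg (not_le.2 hwrap), oplus,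
      if_neg hnowrap, ← uIcc_of_ge (by linarith)]
    have := isLeast_deltag_image_uIcc hg (s := s) (a := s + t' - 1) (b := s + t - 1)
      (mem_uIcc.2 (Or.inr ⟨by linarith, by linarith [ht'.2]⟩))
    convert this using 1
    rw [mg_comm g (s + t - 1)]; ring
  · push Not at hnowrap hwrap
    rw [← Icc_union_Icc_eq_Icc (b := 1 - s) (by linarith) (by linarith), image_union,
      image_gbar_Icc_of_add_le_one (by linarith), image_gbar_Icc_of_one_le_add h01 (by linarith),
      show s + (1 - s) = 1 by ring, sub_self, oplus, if_pos hwrap, oplus,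
      if_neg (not_le.2 hnowrap)]
    have hA := isLeast_deltag_image_uIcc hg (s := s) (a := s + t) (b := 1)
      (mem_uIcc.2 (Or.inl ⟨by linarith [ht.1], hwrap⟩))
    have hB := isLeast_deltag_image_uIcc hg (s := s) (a := s + t' - 1) (b := 0)
      (mem_uIcc.2 (Or.inr ⟨by linarith, by linarith [ht'.2]⟩))
    rw [uIcc_of_le hwrap] at hA
    rw [uIcc_of_ge (by linarith)] at hB
    suffices hval : g s + mg g (s + t) (s + t' - 1) - mg g s (s + t) - mg g s (s + t' - 1) =
        min (g s + mg g (s + t) 1 - mg g s (s + t) - mg g s 1)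
          (g s + mg g (s + t' - 1) 0 - mg g s (s + t' - 1) - mg g s 0) by
      rw [hval]; exact hA.union hB
    rw [mg_comm g (s + t), mg_split hg (by linarith [ht'.2]) (by linarith [ht.1]),
      mg_comm g _ s, mg_eq_zero hg hnn (right_mem_uIcc (a := s + t)) h1,
      mg_eq_zero hg hnn (right_mem_uIcc (a := s)) h1,
      mg_eq_zero hg hnn (right_mem_uIcc (a := s + t' - 1)) h0,
      mg_eq_zero hg hnn (right_mem_uIcc (a := s)) h0]
    simp only [min_def]
    split_ifs <;> linarith

lemma mg_gbar (hg : Continuous g) (hnn : ∀ x, 0 ≤ g x) (h0 : g 0 = 0) (h1 : g 1 = 0)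
    (ht : t ∈ Icc (0 : ℝ) 1) (ht' : t' ∈ Icc (0 : ℝ) 1) :
    mg (gbar g s) t t' =
      g s + mg g (oplus s t) (oplus s t') - mg g s (oplus s t) - mg g s (oplus s t') := by
  rcases le_total t t' with htt' | ht't
  · rw [mg, uIcc_of_le htt', (isLeast_image_gbar_Icc hg hnn h0 h1 ht ht' htt').csInf_eq]
  · rw [mg, uIcc_of_ge ht't, (isLeast_image_gbar_Icc hg hnn h0 h1 ht' ht ht't).csInf_eq,
      mg_comm g (oplus s t')]
    ring

theorem deltag_gbar (hg : Continuous g) (hnn : ∀ x, 0 ≤ g x) (h0 : g 0 = 0) (h1 : g 1 = 0)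
    (ht : t ∈ Icc (0 : ℝ) 1) (ht' : t' ∈ Icc (0 : ℝ) 1) :
    deltag (gbar g s) t t' = deltag g (oplus s t) (oplus s t') := by
  rw [deltag, mg_gbar hg hnn h0 h1 ht ht', gbar, gbar, deltag]
  ring

theorem simg_oplus_iff_simg_gbar (hg : Continuous g) (hnn : ∀ x, 0 ≤ g x) (h0 : g 0 = 0)
    (h1 : g 1 = 0) (ht : t ∈ Icc (0 : ℝ) 1) (ht' : t' ∈ Icc (0 : ℝ) 1) :
    simg g (oplus s t) (oplus s t') ↔ simg (gbar g s) t t' := by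
  have hgbar_nonneg : BddBelow (gbar g s '' uIcc t t') :=
    ⟨0, forall_mem_image.2 fun r _ => deltag_nonneg hg s (oplus s r)⟩
  rw [simg_iff_deltag_eq_zero (isLeast_mg hg _ _).bddBelow,
    simg_iff_deltag_eq_zero hgbar_nonneg, deltag_gbar hg hnn h0 h1 ht ht']

end TreeCoding

lemma ContinuousOn.exists_continuous_eqOn_Icc {f : ℝ → ℝ} {a b : ℝ} (hab : a ≤ b)
    (hf : ContinuousOn f (Icc a b)) :
    ∃ F : ℝ → ℝ, Continuous F ∧ EqOn F f (Icc a b) ∧ range F ⊆ f '' Icc a b :=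
  ⟨f ∘ Subtype.val ∘ projIcc a b hab,
    hf.comp_continuous (continuous_subtype_val.comp continuous_projIcc)
      fun x => (projIcc a b hab x).2,
    fun x hx => by simp [projIcc_of_mem hab hx],
    range_subset_iff.2 fun x => mem_image_of_mem f (projIcc a b hab x).2⟩

/-- Re-rooting identity: for `g : [0,1] → ℝ≥0` continuous with `g(0) = g(1) = 0` and
`s* ∈ [0,1]`, one has `s* ⊕ t ∼_g s* ⊕ t'` if and only if `t ∼_{ḡ} t'`. -/
theorem stmt_16 (g : ℝ → ℝ) (hc : ContinuousOn g (Set.Icc 0 1))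
    (hnn : ∀ t ∈ Set.Icc (0 : ℝ) 1, 0 ≤ g t) (h0 : g 0 = 0) (h1 : g 1 = 0)
    (sstar : ℝ) (hs : sstar ∈ Set.Icc (0 : ℝ) 1) :
    ∀ t ∈ Set.Icc (0 : ℝ) 1, ∀ t' ∈ Set.Icc (0 : ℝ) 1,
      (simg g (oplus sstar t) (oplus sstar t') ↔ simg (gbar g sstar) t t') := by
  intro t ht t' ht'
  obtain ⟨G, hGc, hGg, hGrange⟩ := hc.exists_continuous_eqOn_Icc zero_le_one
  have hGnn : ∀ x, 0 ≤ G x := fun x => by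
    obtain ⟨y, hy, hGy⟩ := hGrange (mem_range_self x)
    exact hGy ▸ hnn y hy
  rw [← simg_congr (hGg.mono (uIcc_subset_Icc (oplus_mem hs ht) (oplus_mem hs ht'))),
    ← simg_congr ((eqOn_gbar hs hGg).mono (uIcc_subset_Icc ht ht'))]
  exact simg_oplus_iff_simg_gbar hGc hGnn (by rw [hGg (left_mem_Icc.2 zero_le_one), h0])
    (by rw [hGg (right_mem_Icc.2 zero_le_one), h1]) ht ht'
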